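/- Let m ∈ ℕ, let X be a compact Hausdorff space, and let p be a projection in M_N(C(X)) such that e₁₁ ⋠ p^{⊕8m}, i.e., there is no v ∈ M_{8mN}(C(X)) with v*v = e₁₁ and vv* ≤ p^{⊕8m}. Let q = e₁₁ ⊕ p ∈ M_{N+1}(C(X)) and let A = her(q) = q·M_{N+1}(C(X))·q, a unital C*-algebra with unit q. Then A fails property C_m: there do not exist x₁,…,x_m, a₁,…,a_m, b₁,…,b_m, y₁,…,y_m ∈ A such that q = Σ_{i=1}^m xᵢ(aᵢbᵢ − bᵢaᵢ)yᵢ. -/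

import Mathlib

/-!
Write `q = e₁₁ ⊕ p` and read `q = ∑ xᵢ [aᵢ, bᵢ] yᵢ` at the `(1,1)` entry. Splitting each product
along the decomposition `1 = e₁₁ ⊕ 1`, the purely scalar terms `x₁₁ a₁₁ b₁₁ y₁₁` and
`x₁₁ b₁₁ a₁₁ y₁₁` cancel, so `1` is a sum of `6m` pairings of a row with the lower-left column of
one of `aby, by, y, bay, ay, y`. Since these lie in `her(q)`, their columns lie in the range of `p`.
Stacked, they form a continuous nowhere-vanishing section `w` of `p^{⊕8m}`, and for the
normalisation `u` of `w` the rank-one partial isometry `u e₁ᵀ` witnesses `e₁₁ ≾ p^{⊕8m}`.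
-/

open Matrix ComplexOrder
open scoped MatrixOrder

section CornerExpansion

variable {n R : Type*}

def cornerRow (M : Matrix (Unit ⊕ n) (Unit ⊕ n) R) : n → R := fun k => M (.inl ()) (.inr k)

def cornerCol (M : Matrix (Unit ⊕ n) (Unit ⊕ n) R) : n → R := fun k => M (.inr k) (.inl ())

variable [Fintype n]

lemma mul_apply_inl_inl [NonUnitalNonAssocSemiring R] (M₁ M₂ : Matrix (Unit ⊕ n) (Unit ⊕ n) R) :
    (M₁ * M₂) (.inl ()) (.inl ()) =
      M₁ (.inl ()) (.inl ()) * M₂ (.inl ()) (.inl ()) + cornerRow M₁ ⬝ᵥ cornerCol M₂ := by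
  simp [mul_apply, dotProduct, cornerRow, cornerCol]

variable [CommRing R]

-- Only six columns are needed; the two zero columns pad the count to the `8` of `p^{⊕8m}`.
def commutatorRows (x a b : Matrix (Unit ⊕ n) (Unit ⊕ n) R) : Fin 8 → n → R :=
  let c := fun M : Matrix (Unit ⊕ n) (Unit ⊕ n) R => M (.inl ()) (.inl ())
  ![cornerRow x, c x • cornerRow a, (c x * c a) • cornerRow b,
    -cornerRow x, -(c x • cornerRow b), -((c x * c b) • cornerRow a), 0, 0]

def commutatorCols (a b y : Matrix (Unit ⊕ n) (Unit ⊕ n) R) : Fin 8 → n → R :=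
  ![cornerCol (a * b * y), cornerCol (b * y), cornerCol y,
    cornerCol (b * a * y), cornerCol (a * y), cornerCol y, 0, 0]

theorem mul_commutator_mul_apply_inl_inl (x a b y : Matrix (Unit ⊕ n) (Unit ⊕ n) R) :
    (x * (a * b - b * a) * y) (.inl ()) (.inl ()) =
      ∑ s, commutatorRows x a b s ⬝ᵥ commutatorCols a b y s := by
  have hsplit : x * (a * b - b * a) * y = x * (a * b * y) - x * (b * a * y) := by noncomm_ring
  rw [hsplit, Matrix.sub_apply]
  simp only [mul_assoc, mul_apply_inl_inl, commutatorRows, commutatorCols,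
    Fin.sum_univ_eight, Matrix.cons_val, smul_dotProduct, neg_dotProduct, zero_dotProduct,
    smul_eq_mul]
  ring

end CornerExpansion

section Compression

variable {m n R : Type*} [Fintype n]

theorem IsIdempotentElem.mul_eq_of_mul_mul_eq {S : Type*} [Semigroup S] {q z : S}
    (hq : IsIdempotentElem q) (h : q * z * q = z) : q * z = z :=
  calc q * z = q * (q * z * q) := by rw [h]
    _ = q * z * q := by simp only [← mul_assoc, hq.eq]
    _ = z := h

theorem isIdempotentElem_fromBlocks_one [Fintype m] [DecidableEq m] [Semiring R]
    {P : Matrix n n R} (hP : IsIdempotentElem P) :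
    IsIdempotentElem (fromBlocks (1 : Matrix m m R) 0 0 P) := by
  rw [IsIdempotentElem, fromBlocks_multiply, hP.eq]
  simp

theorem mulVec_cornerCol_of_fromBlocks_mul [Semiring R] {P : Matrix n n R}
    {z : Matrix (Unit ⊕ n) (Unit ⊕ n) R} (h : fromBlocks 1 0 0 P * z = z) :
    P *ᵥ cornerCol z = cornerCol z := by
  funext k
  conv_rhs => rw [← h]
  simp [cornerCol, mulVec, dotProduct, mul_apply]

theorem mulVec_commutatorCols [CommRing R] {P : Matrix n n R}
    {a b y : Matrix (Unit ⊕ n) (Unit ⊕ n) R} (ha : fromBlocks 1 0 0 P * a = a)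
    (hb : fromBlocks 1 0 0 P * b = b) (hy : fromBlocks 1 0 0 P * y = y) (s : Fin 8) :
    P *ᵥ commutatorCols a b y s = commutatorCols a b y s := by
  fin_cases s <;> simp only [commutatorCols, Fin.zero_eta, Fin.mk_one, Fin.reduceFinMk,
    Matrix.cons_val, mulVec_zero] <;>
    apply mulVec_cornerCol_of_fromBlocks_mul <;> simp only [← Matrix.mul_assoc, ha, hb, hy]

end Compression

theorem continuous_cornerCol {X n R : Type*} [TopologicalSpace X] [TopologicalSpace R]
    {M : X → Matrix (Unit ⊕ n) (Unit ⊕ n) R} (hM : Continuous M) :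
    Continuous fun t => cornerCol (M t) :=
  continuous_pi fun _ => hM.matrix_elem _ _

theorem continuous_commutatorCols {X n R : Type*} [TopologicalSpace X] [Fintype n]
    [CommRing R] [TopologicalSpace R] [IsTopologicalRing R]
    {a b y : X → Matrix (Unit ⊕ n) (Unit ⊕ n) R} (ha : Continuous a) (hb : Continuous b)
    (hy : Continuous y) (s : Fin 8) :
    Continuous fun t => commutatorCols (a t) (b t) (y t) s := by
  fin_cases s <;> simp only [commutatorCols, Fin.zero_eta, Fin.mk_one, Fin.reduceFinMk,
    Matrix.cons_val] <;> first | exact continuous_const | exact continuous_cornerCol (by fun_prop)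

theorem blockDiagonal_mulVec_apply {n o R : Type*} [Fintype n] [Fintype o] [DecidableEq o]
    [NonUnitalNonAssocSemiring R] (M : o → Matrix n n R) (w : n × o → R) (k : n) (j : o) :
    (blockDiagonal M *ᵥ w) (k, j) = (M j *ᵥ fun k' => w (k', j)) k := by
  simp [mulVec, dotProduct, blockDiagonal_apply, Fintype.sum_prod_type, ite_mul]

theorem IsStarProjection.blockDiagonal {n o R : Type*} [Fintype n] [Fintype o] [DecidableEq o]
    [NonUnitalSemiring R] [StarRing R] {M : o → Matrix n n R} (hM : ∀ j, IsStarProjection (M j)) :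
    IsStarProjection (blockDiagonal M) where
  isIdempotentElem := by
    rw [IsIdempotentElem, ← blockDiagonal_mul]
    exact congrArg _ (funext fun j => (hM j).isIdempotentElem.eq)
  isSelfAdjoint := by
    rw [IsSelfAdjoint, star_eq_conjTranspose, blockDiagonal_conjTranspose]
    exact congrArg _ (funext fun j => (hM j).isSelfAdjoint.star_eq)

section RankOne

variable {ι : Type*} [Fintype ι]

lemma isStarProjection_vecMulVec_star {R : Type*} [Semiring R] [StarRing R] {u : ι → R}
    (hu : star u ⬝ᵥ u = 1) :
    IsStarProjection (vecMulVec u (star u)) where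
  isIdempotentElem := by
    rw [IsIdempotentElem, vecMulVec_mul_vecMulVec, hu, one_smul]
  isSelfAdjoint := by
    rw [IsSelfAdjoint, star_eq_conjTranspose, conjTranspose_vecMulVec, star_star]

lemma exists_continuous_normalization {X : Type*} [TopologicalSpace X] {w : X → ι → ℂ}
    (hw : Continuous w) (hw0 : ∀ t, w t ≠ 0) :
    ∃ u : X → ι → ℂ, Continuous u ∧ (∀ t, star (u t) ⬝ᵥ u t = 1) ∧
      ∀ t, ∃ c : ℂ, u t = c • w t := by
  have hW0 : ∀ t, WithLp.toLp 2 (w t) ≠ 0 := fun t => by simpa using hw0 t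
  refine ⟨fun t => ((‖WithLp.toLp 2 (w t)‖⁻¹ : ℝ) : ℂ) • w t, ?_, fun t => ?_,
    fun t => ⟨_, rfl⟩⟩
  · have : Continuous fun t => ‖WithLp.toLp 2 (w t)‖ :=
      continuous_norm.comp ((PiLp.continuous_toLp 2 _).comp hw)
    exact (Complex.continuous_ofReal.comp (this.inv₀ fun t => norm_ne_zero_iff.mpr (hW0 t))).smul hw
  · rw [dotProduct_comm, ← EuclideanSpace.inner_toLp_toLp, WithLp.toLp_smul,
      inner_self_eq_norm_sq_to_K, norm_smul]
    simp [hW0 t]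

-- Murray–von Neumann subequivalence `e_{i₀ i₀} ≾ P` in `M_ι(C(X))`.
def SingleSubequiv {X : Type*} [TopologicalSpace X] [DecidableEq ι] (P : X → Matrix ι ι ℂ)
    (i₀ : ι) : Prop :=
  ∃ v : X → Matrix ι ι ℂ, Continuous v ∧ (∀ t, (v t)ᴴ * v t = single i₀ i₀ 1) ∧
    ∀ t, (P t - v t * (v t)ᴴ).PosSemidef

theorem singleSubequiv_of_mulVec_eq {X : Type*} [TopologicalSpace X] [DecidableEq ι]
    {P : X → Matrix ι ι ℂ} (hP : ∀ t, IsStarProjection (P t)) {w : X → ι → ℂ}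
    (hw : Continuous w) (hw0 : ∀ t, w t ≠ 0) (hPw : ∀ t, P t *ᵥ w t = w t) (i₀ : ι) :
    SingleSubequiv P i₀ := by
  obtain ⟨u, hu, hu1, hcu⟩ := exists_continuous_normalization hw hw0
  have hPu : ∀ t, P t *ᵥ u t = u t := fun t => by
    obtain ⟨c, hc⟩ := hcu t
    rw [hc, mulVec_smul, hPw]
  have hstar : star (Pi.single i₀ 1 : ι → ℂ) = Pi.single i₀ 1 := by simp
  refine ⟨fun t => vecMulVec (u t) (Pi.single i₀ 1), ?_, fun t => ?_, fun t => ?_⟩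
  · exact continuous_matrix fun i j => (continuous_apply i |>.comp hu).mul continuous_const
  · rw [conjTranspose_vecMulVec, vecMulVec_mul_vecMulVec, hstar, hu1, one_smul,
      single_eq_single_vecMulVec_single]
  · have hvv : vecMulVec (u t) (Pi.single i₀ 1) * (vecMulVec (u t) (Pi.single i₀ 1))ᴴ =
        vecMulVec (u t) (star (u t)) := by
      rw [conjTranspose_vecMulVec, vecMulVec_mul_vecMulVec, hstar, single_dotProduct]
      simp
    rw [hvv, ← nonneg_iff_posSemidef]
    refine ((isStarProjection_vecMulVec_star (hu1 t)).sub_of_mul_eq_right (hP t) ?_).nonneg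
    rw [mul_vecMulVec, hPu]

end RankOne

theorem singleSubequiv_of_sum_commutator_eq_one {X ι κ n : Type*} [TopologicalSpace X]
    [Fintype ι] [Fintype κ] [DecidableEq κ] [Fintype n] [DecidableEq n]
    {p : X → Matrix n n ℂ} (hp : ∀ t, IsStarProjection (p t)) (e : Fin 8 × ι ≃ κ)
    {x a b y : ι → X → Matrix (Unit ⊕ n) (Unit ⊕ n) ℂ}
    (ha : ∀ i, Continuous (a i)) (hb : ∀ i, Continuous (b i)) (hy : ∀ i, Continuous (y i))
    (hqa : ∀ i t, fromBlocks 1 0 0 (p t) * a i t = a i t)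
    (hqb : ∀ i t, fromBlocks 1 0 0 (p t) * b i t = b i t)
    (hqy : ∀ i t, fromBlocks 1 0 0 (p t) * y i t = y i t)
    (hsum : ∀ t, ∑ i, (x i t * (a i t * b i t - b i t * a i t) * y i t) (.inl ()) (.inl ()) = 1)
    (i₀ : n × κ) :
    SingleSubequiv (fun t => blockDiagonal fun _ : κ => p t) i₀ := by
  let C : X → Fin 8 × ι → n → ℂ := fun t si =>
    commutatorCols (a si.2 t) (b si.2 t) (y si.2 t) si.1
  have hC : ∀ t, ∃ si, C t si ≠ 0 := by
    intro t
    by_contra! h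
    have h' : ∀ i s, commutatorCols (a i t) (b i t) (y i t) s = 0 := fun i s => h (s, i)
    simpa [mul_commutator_mul_apply_inl_inl, h'] using hsum t
  refine singleSubequiv_of_mulVec_eq (fun t => IsStarProjection.blockDiagonal fun _ => hp t)
    (w := fun t kj => C t (e.symm kj.2) kj.1) ?_ (fun t => ?_) (fun t => ?_) i₀
  · exact continuous_pi fun kj => continuous_apply _ |>.comp <|
      continuous_commutatorCols (ha _) (hb _) (hy _) _
  · obtain ⟨si, hsi⟩ := hC t
    intro h0
    refine hsi (funext fun k => ?_)
    simpa using congrFun h0 (k, e si)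
  · funext ⟨k, j⟩
    rw [blockDiagonal_mulVec_apply]
    show (p t *ᵥ C t (e.symm j)) k = C t (e.symm j) k
    generalize e.symm j = si
    exact congrFun (mulVec_commutatorCols (hqa si.2 t) (hqb si.2 t) (hqy si.2 t) si.1) k

/-- Let `p` be a projection in `M_N(C(X))` (for `X` compact Hausdorff)
such that `e₁₁ ⋠ p^{⊕8m}`.  Let `q = e₁₁ ⊕ p ∈ M_{N+1}(C(X))` (realized with index type
`Unit ⊕ Fin N`) and let `A = her(q) = q·M_{N+1}(C(X))·q`, a unital C*-algebra with unit
`q`.  Then `A` fails property `C_m`: the unit `q` is not a sum of `m` terms `xᵢ[aᵢ,bᵢ]yᵢ`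
with all entries in `A`. -/
theorem stmt_9 (m : ℕ) (hm : 0 < m) (N : ℕ) (hN : 0 < N)
    (X : Type*) [TopologicalSpace X]
    (p : X → Matrix (Fin N) (Fin N) ℂ)
    (hproj : ∀ t, p t * p t = p t ∧ (p t)ᴴ = p t)
    (hsub : ¬ ∃ v : X → Matrix (Fin N × Fin (8 * m)) (Fin N × Fin (8 * m)) ℂ,
      Continuous v ∧
      (∀ t, (v t)ᴴ * v t =
        Matrix.single (⟨0, hN⟩, ⟨0, by omega⟩) (⟨0, hN⟩, ⟨0, by omega⟩) 1) ∧
      (∀ t, (Matrix.blockDiagonal (fun _ : Fin (8 * m) => p t) - v t * (v t)ᴴ).PosSemidef)) :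
    ¬ ∃ x a b y : Fin m → (X → Matrix (Unit ⊕ Fin N) (Unit ⊕ Fin N) ℂ),
      (∀ i, Continuous (x i) ∧ Continuous (a i) ∧ Continuous (b i) ∧ Continuous (y i)) ∧
      (∀ i t,
        (Matrix.fromBlocks 1 0 0 (p t)) * x i t * (Matrix.fromBlocks 1 0 0 (p t)) = x i t ∧
        (Matrix.fromBlocks 1 0 0 (p t)) * a i t * (Matrix.fromBlocks 1 0 0 (p t)) = a i t ∧
        (Matrix.fromBlocks 1 0 0 (p t)) * b i t * (Matrix.fromBlocks 1 0 0 (p t)) = b i t ∧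
        (Matrix.fromBlocks 1 0 0 (p t)) * y i t * (Matrix.fromBlocks 1 0 0 (p t)) = y i t) ∧
      (∀ t, (Matrix.fromBlocks 1 0 0 (p t) : Matrix (Unit ⊕ Fin N) (Unit ⊕ Fin N) ℂ) =
        ∑ i, x i t * (a i t * b i t - b i t * a i t) * y i t) := by
  rintro ⟨x, a, b, y, hcont, hcorner, hsum⟩
  have hp : ∀ t, IsStarProjection (p t) := fun t => ⟨(hproj t).1, (hproj t).2⟩
  have hq : ∀ t, IsIdempotentElem (fromBlocks 1 0 0 (p t) : Matrix (Unit ⊕ Fin N) _ ℂ) :=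
    fun t => isIdempotentElem_fromBlocks_one (hp t).isIdempotentElem
  refine hsub <| singleSubequiv_of_sum_commutator_eq_one hp finProdFinEquiv (x := x)
    (fun i => (hcont i).2.1) (fun i => (hcont i).2.2.1) (fun i => (hcont i).2.2.2)
    (fun i t => (hq t).mul_eq_of_mul_mul_eq (hcorner i t).2.1)
    (fun i t => (hq t).mul_eq_of_mul_mul_eq (hcorner i t).2.2.1)
    (fun i t => (hq t).mul_eq_of_mul_mul_eq (hcorner i t).2.2.2) (fun t => ?_) _
  rw [← Matrix.sum_apply, ← hsum t]
  rfl
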